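/- For every real x > 0, the remainder σ(x) = 12x · ln( Γ(x+1) / (√(2πx) · (x/e)^x) ) satisfies σ(x) = 12 · ∫₀^∞ φ(s/x)·e^{−s} ds, where φ(t) = (1/(e^t − 1) − 1/t + 1/2)/t. -/

import Mathlib

open Real MeasureTheory

/-- The Stirling remainder `σ(x) = 12x · ln( Γ(x+1) / (√(2πx)·(x/e)^x) )`. -/
noncomputable def stirlingSigma (x : ℝ) : ℝ :=
  12 * x * Real.log (Real.Gamma (x + 1) / (Real.sqrt (2 * π * x) * (x / Real.exp 1) ^ x))

/-- `φ(t) = (1/(eᵗ − 1) − 1/t + 1/2)/t`. -/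
noncomputable def binetPhi (t : ℝ) : ℝ :=
  (1 / (Real.exp t - 1) - 1 / t + 1 / 2) / t

open Set Filter Topology

namespace BinetAux

/-- helper: f 0 = 0, deriv ≥ 0 on Ici 0 ⇒ f ≥ 0 on Ici 0 -/
lemma nonneg_of_deriv {f f' : ℝ → ℝ} (hd : ∀ t, HasDerivAt f (f' t) t)
    (h0 : f 0 = 0) (h' : ∀ t, 0 ≤ t → 0 ≤ f' t) : ∀ t, 0 ≤ t → 0 ≤ f t := by
  intro t ht
  have hmono : MonotoneOn f (Ici (0:ℝ)) := by
    refine monotoneOn_of_deriv_nonneg (convex_Ici 0) ?_ ?_ ?_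
    · exact (continuous_iff_continuousAt.2 fun x => (hd x).continuousAt).continuousOn
    · intro x hx; exact (hd x).differentiableAt.differentiableWithinAt
    · intro x hx
      rw [interior_Ici] at hx
      rw [(hd x).deriv]
      exact h' x hx.le
  have := hmono (self_mem_Ici) ht ht
  rwa [h0] at this

lemma aux1 {t : ℝ} (ht : 0 ≤ t) : 0 ≤ Real.exp t * (t - 2) + t + 2 := by
  have h2 : ∀ s, 0 ≤ s → 0 ≤ Real.exp s * (s - 1) + 1 := by
    have hd : ∀ s:ℝ, HasDerivAt (fun u => Real.exp u * (u - 1) + 1) (Real.exp s * s) s := by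
      intro s
      have := ((Real.hasDerivAt_exp s).mul ((hasDerivAt_id s).sub_const 1)).add_const 1
      refine this.congr_deriv ?_
      simp only [id_eq]; ring
    refine nonneg_of_deriv hd (by norm_num) ?_
    intro s hs; positivity
  have hd : ∀ s:ℝ, HasDerivAt (fun u => Real.exp u * (u - 2) + u + 2)
      (Real.exp s * (s - 1) + 1) s := by
    intro s
    have := (((Real.hasDerivAt_exp s).mul ((hasDerivAt_id s).sub_const 2)).add
      (hasDerivAt_id s)).add_const 2
    refine this.congr_deriv ?_
    simp only [id_eq]; ring
  exact nonneg_of_deriv hd (by norm_num) h2 t ht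

lemma aux2 {t : ℝ} (ht : 0 ≤ t) : 0 ≤ Real.exp t * (t^2 - 6*t + 12) - (t^2 + 6*t + 12) := by
  have h3 : ∀ s, 0 ≤ s → 0 ≤ Real.exp s * (s^2 - 2*s + 2) - 2 := by
    have hd : ∀ s:ℝ, HasDerivAt (fun u => Real.exp u * (u^2 - 2*u + 2) - 2)
        (Real.exp s * s^2) s := by
      intro s
      have h := ((Real.hasDerivAt_exp s).mul
        (((hasDerivAt_pow 2 s).sub ((hasDerivAt_id s).const_mul 2)).add_const 2)).sub_const 2
      refine h.congr_deriv ?_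
      simp only [id_eq, Pi.sub_apply]; push_cast; ring
    refine nonneg_of_deriv hd (by norm_num) ?_
    intro s hs; positivity
  have h2 : ∀ s, 0 ≤ s → 0 ≤ Real.exp s * (s^2 - 4*s + 6) - (2*s + 6) := by
    have hd : ∀ s:ℝ, HasDerivAt (fun u => Real.exp u * (u^2 - 4*u + 6) - (2*u + 6))
        (Real.exp s * (s^2 - 2*s + 2) - 2) s := by
      intro s
      have h := ((Real.hasDerivAt_exp s).mul
        (((hasDerivAt_pow 2 s).sub ((hasDerivAt_id s).const_mul 4)).add_const 6)).sub
        (((hasDerivAt_id s).const_mul 2).add_const 6)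
      refine h.congr_deriv ?_
      simp only [id_eq, Pi.sub_apply]; push_cast; ring
    exact nonneg_of_deriv hd (by norm_num) h3
  have hd : ∀ s:ℝ, HasDerivAt (fun u => Real.exp u * (u^2 - 6*u + 12) - (u^2 + 6*u + 12))
      (Real.exp s * (s^2 - 4*s + 6) - (2*s + 6)) s := by
    intro s
    have h := ((Real.hasDerivAt_exp s).mul
      (((hasDerivAt_pow 2 s).sub ((hasDerivAt_id s).const_mul 6)).add_const 12)).sub
      ((((hasDerivAt_pow 2 s).add ((hasDerivAt_id s).const_mul 6)).add_const 12))
    refine h.congr_deriv ?_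
    simp only [id_eq, Pi.sub_apply]; push_cast; ring
  exact nonneg_of_deriv hd (by norm_num) h2 t ht

lemma exp_sub_one_pos {t : ℝ} (ht : 0 < t) : 0 < Real.exp t - 1 := by
  have := Real.add_one_le_exp t
  linarith

lemma phi_nonneg {t : ℝ} (ht : 0 < t) : 0 ≤ binetPhi t := by
  have he := exp_sub_one_pos ht
  have h1 : binetPhi t = (Real.exp t * (t - 2) + t + 2) / (2 * t^2 * (Real.exp t - 1)) := by
    unfold binetPhi
    field_simp
    ring
  rw [h1]
  exact div_nonneg (aux1 ht.le) (by positivity)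

lemma phi_le {t : ℝ} (ht : 0 < t) : binetPhi t ≤ 1 / 12 := by
  have he := exp_sub_one_pos ht
  have h1 : 1/12 - binetPhi t
      = (Real.exp t * (t^2 - 6*t + 12) - (t^2 + 6*t + 12)) / (12 * t^2 * (Real.exp t - 1)) := by
    unfold binetPhi
    field_simp
    ring
  have h2 : 0 ≤ 1/12 - binetPhi t := by
    rw [h1]; exact div_nonneg (aux2 ht.le) (by positivity)
  linarith

lemma phi_continuousOn : ContinuousOn binetPhi (Ioi 0) := by
  unfold binetPhi
  refine ContinuousOn.div ?_ continuousOn_id (fun t ht => ne_of_gt ht)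
  refine ContinuousOn.add (ContinuousOn.sub ?_ ?_) continuousOn_const
  · exact continuousOn_const.div (Real.continuous_exp.continuousOn.sub continuousOn_const)
      (fun t ht => ne_of_gt (exp_sub_one_pos ht))
  · exact continuousOn_const.div continuousOn_id (fun t ht => ne_of_gt ht)



lemma integrableOn_pow_mul_exp (n : ℕ) {c : ℝ} (hc : 0 < c) :
    IntegrableOn (fun t : ℝ => t ^ n * Real.exp (-(c * t))) (Ioi 0) := by
  have h := integrableOn_rpow_mul_exp_neg_mul_rpow (p := 1) (s := (n:ℝ)) (b := c)
    (by have := Nat.cast_nonneg (α := ℝ) n; linarith) one_pos hc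
  refine h.congr_fun (fun t ht => ?_) measurableSet_Ioi
  dsimp only
  rw [Real.rpow_one, Real.rpow_natCast, neg_mul]

lemma integrableOn_exp_c {c : ℝ} (hc : 0 < c) :
    IntegrableOn (fun t : ℝ => Real.exp (-(c * t))) (Ioi 0) := by
  simpa using exp_neg_integrableOn_Ioi 0 hc

/-- integrability of `g t * exp (-(x*t))` for `g` continuous on `Ioi 0` with `|g| ≤ 1 + t`. -/
lemma integrableOn_aux {g : ℝ → ℝ} (hgc : ContinuousOn g (Ioi 0))
    (hb : ∀ t ∈ Ioi (0:ℝ), |g t| ≤ 1 + t) {x : ℝ} (hx : 0 < x) :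
    IntegrableOn (fun t => g t * Real.exp (-(x * t))) (Ioi 0) := by
  have hmeas : AEStronglyMeasurable (fun t => g t * Real.exp (-(x * t)))
      (volume.restrict (Ioi 0)) := by
    refine ContinuousOn.aestronglyMeasurable ?_ measurableSet_Ioi
    exact hgc.mul ((Real.continuous_exp.comp (continuous_const.mul continuous_id).neg).continuousOn)
  have hint : IntegrableOn (fun t : ℝ => Real.exp (-(x * t)) + t * Real.exp (-(x * t)))
      (Ioi 0) := by
    refine (integrableOn_exp_c hx).add ?_
    simpa using integrableOn_pow_mul_exp 1 hx
  refine Integrable.mono hint hmeas ?_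
  filter_upwards [ae_restrict_mem measurableSet_Ioi] with t ht
  have h1 : |g t * Real.exp (-(x * t))| = |g t| * Real.exp (-(x*t)) := by
    rw [abs_mul, abs_of_nonneg (Real.exp_pos _).le]
  rw [Real.norm_eq_abs, Real.norm_eq_abs, h1]
  have h2 : |g t| * Real.exp (-(x*t)) ≤ (1 + t) * Real.exp (-(x*t)) :=
    mul_le_mul_of_nonneg_right (hb t ht) (Real.exp_pos _).le
  have ht' : (0:ℝ) < t := ht
  calc |g t| * Real.exp (-(x*t)) ≤ (1+t) * Real.exp (-(x*t)) := h2
    _ = Real.exp (-(x*t)) + t * Real.exp (-(x*t)) := by ring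
    _ ≤ |Real.exp (-(x*t)) + t * Real.exp (-(x*t))| := le_abs_self _

/-- Binet's μ function. -/
noncomputable def mu (x : ℝ) : ℝ := ∫ t in Ioi (0:ℝ), binetPhi t * Real.exp (-(x * t))

lemma phi_abs_le {t : ℝ} (ht : t ∈ Ioi (0:ℝ)) : |binetPhi t| ≤ 1 + t := by
  rw [abs_of_nonneg (phi_nonneg ht)]
  have := phi_le ht
  have : (0:ℝ) < t := ht
  linarith [phi_le (show (0:ℝ) < t from ht)]

lemma integrableOn_phi_exp {x : ℝ} (hx : 0 < x) :
    IntegrableOn (fun t => binetPhi t * Real.exp (-(x * t))) (Ioi 0) :=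
  integrableOn_aux phi_continuousOn (fun t ht => phi_abs_le ht) hx

lemma integral_exp_c {c : ℝ} (hc : 0 < c) :
    ∫ t in Ioi (0:ℝ), Real.exp (-(c * t)) = 1 / c := by
  have h := Real.integral_rpow_mul_exp_neg_mul_Ioi (a := 1) one_pos hc
  simp only [Real.rpow_one, Real.Gamma_one, mul_one, sub_self] at h
  rw [← h]
  refine setIntegral_congr_fun measurableSet_Ioi (fun t ht => ?_)
  rw [Real.rpow_zero, one_mul]

lemma integral_t_exp_c {c : ℝ} (hc : 0 < c) :
    ∫ t in Ioi (0:ℝ), t * Real.exp (-(c * t)) = 1 / c ^ 2 := by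
  have h := Real.integral_rpow_mul_exp_neg_mul_Ioi (a := 2) two_pos hc
  rw [Real.Gamma_two, mul_one] at h
  calc ∫ t in Ioi (0:ℝ), t * Real.exp (-(c * t))
      = ∫ t in Ioi (0:ℝ), t ^ ((2:ℝ) - 1) * Real.exp (-(c * t)) := by
        refine setIntegral_congr_fun measurableSet_Ioi (fun t ht => ?_)
        norm_num
    _ = (1/c) ^ (2:ℝ) := h
    _ = 1 / c ^ 2 := by
        rw [show ((2:ℝ)) = ((2:ℕ):ℝ) by norm_num, Real.rpow_natCast]; ring

lemma integral_t2_exp_c {c : ℝ} (hc : 0 < c) :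
    ∫ t in Ioi (0:ℝ), t^2 * Real.exp (-(c * t)) = 2 / c ^ 3 := by
  have h := Real.integral_rpow_mul_exp_neg_mul_Ioi (a := 3) three_pos hc
  have hg : Real.Gamma 3 = 2 := by
    rw [show (3:ℝ) = ((2:ℕ):ℝ)+1 by norm_num, Real.Gamma_nat_eq_factorial]
    norm_num
  rw [hg] at h
  calc ∫ t in Ioi (0:ℝ), t^2 * Real.exp (-(c * t))
      = ∫ t in Ioi (0:ℝ), t ^ ((3:ℝ) - 1) * Real.exp (-(c * t)) := by
        refine setIntegral_congr_fun measurableSet_Ioi (fun t ht => ?_)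
        rw [show (3:ℝ) - 1 = ((2:ℕ):ℝ) by norm_num, Real.rpow_natCast]
    _ = (1/c) ^ (3:ℝ) * 2 := h
    _ = 2 / c ^ 3 := by
        rw [show ((3:ℝ)) = ((3:ℕ):ℝ) by norm_num, Real.rpow_natCast]; ring

lemma contOn_exp_mul (y : ℝ) : ContinuousOn (fun t : ℝ => Real.exp (-(y * t))) (Ioi 0) :=
  (Real.continuous_exp.comp (continuous_const.mul continuous_id).neg).continuousOn

/-- differentiation under the integral sign for `∫ g t e^{-yt}`. -/
lemma hasDerivAt_integral_aux {g : ℝ → ℝ} (hgc : ContinuousOn g (Ioi 0))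
    (hg0 : ∀ t ∈ Ioi (0:ℝ), 0 ≤ g t) (hg1 : ∀ t ∈ Ioi (0:ℝ), g t ≤ 1 + t)
    {x : ℝ} (hx : 0 < x) :
    HasDerivAt (fun y => ∫ t in Ioi (0:ℝ), g t * Real.exp (-(y * t)))
      (- ∫ t in Ioi (0:ℝ), t * (g t * Real.exp (-(x * t)))) x := by
  have habs : ∀ t ∈ Ioi (0:ℝ), |g t| ≤ 1 + t := fun t ht => by
    rw [abs_of_nonneg (hg0 t ht)]; exact hg1 t ht
  have hmeas : ∀ y : ℝ, AEStronglyMeasurable (fun t => g t * Real.exp (-(y * t)))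
      (volume.restrict (Ioi 0)) := fun y =>
    ContinuousOn.aestronglyMeasurable (hgc.mul (contOn_exp_mul y)) measurableSet_Ioi
  have hmeas' : AEStronglyMeasurable (fun t : ℝ => -(t * (g t * Real.exp (-(x * t)))))
      (volume.restrict (Ioi 0)) :=
    (ContinuousOn.aestronglyMeasurable
      (continuousOn_id.mul (hgc.mul (contOn_exp_mul x))) measurableSet_Ioi).neg
  have hbound_int : IntegrableOn (fun t : ℝ => t * (1 + t) * Real.exp (-(x/2 * t))) (Ioi 0) := by
    have h : IntegrableOn
        (fun t : ℝ => t ^ 1 * Real.exp (-(x/2 * t)) + t ^ 2 * Real.exp (-(x/2 * t))) (Ioi 0) :=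
      (integrableOn_pow_mul_exp 1 (show 0 < x/2 by linarith)).add
        (integrableOn_pow_mul_exp 2 (show 0 < x/2 by linarith))
    refine h.congr_fun (fun t ht => ?_) measurableSet_Ioi
    ring
  have key := hasDerivAt_integral_of_dominated_loc_of_deriv_le
    (F := fun y t => g t * Real.exp (-(y * t)))
    (F' := fun y t => -(t * (g t * Real.exp (-(y * t)))))
    (x₀ := x) (s := Metric.ball x (x/2))
    (bound := fun t => t * (1 + t) * Real.exp (-(x/2 * t)))
    (Metric.ball_mem_nhds x (by linarith))
    (Filter.Eventually.of_forall hmeas)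
    (integrableOn_aux hgc habs hx)
    hmeas'
    ?_ hbound_int ?_
  · have heq : (∫ t in Ioi (0:ℝ), -(t * (g t * Real.exp (-(x * t)))))
        = - ∫ t in Ioi (0:ℝ), t * (g t * Real.exp (-(x * t))) := integral_neg _
    rw [heq] at key
    exact key.2
  · filter_upwards [ae_restrict_mem measurableSet_Ioi] with t ht
    intro y hy
    have ht' : (0:ℝ) < t := ht
    have hy' : x/2 ≤ y := by
      have := abs_lt.1 (mem_ball_iff_norm.1 hy)
      linarith [this.1]
    have hgt := hg0 t ht
    have hgl := hg1 t ht
    rw [Real.norm_eq_abs, abs_neg, abs_mul, abs_mul, abs_of_nonneg ht'.le,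
      abs_of_nonneg hgt, abs_of_nonneg (Real.exp_pos _).le]
    have hexp : Real.exp (-(y * t)) ≤ Real.exp (-(x/2 * t)) := by
      apply Real.exp_le_exp.2
      nlinarith
    calc t * (g t * Real.exp (-(y * t))) ≤ t * ((1+t) * Real.exp (-(y*t))) := by
          apply mul_le_mul_of_nonneg_left (mul_le_mul_of_nonneg_right hgl (Real.exp_pos _).le) ht'.le
      _ ≤ t * ((1+t) * Real.exp (-(x/2*t))) := by
          apply mul_le_mul_of_nonneg_left (mul_le_mul_of_nonneg_left hexp (by linarith)) ht'.le
      _ = t * (1+t) * Real.exp (-(x/2*t)) := by ring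
  · filter_upwards [ae_restrict_mem measurableSet_Ioi] with t ht
    intro y hy
    have hd : HasDerivAt (fun y : ℝ => g t * Real.exp (-(y * t)))
        (g t * (Real.exp (-(y * t)) * (-t))) y := by
      have h1 : HasDerivAt (fun y : ℝ => -(y * t)) (-t) y := by
        simpa [Pi.neg_def] using ((hasDerivAt_id y).mul_const t).neg
      exact (h1.exp).const_mul (g t)
    refine hd.congr_deriv ?_
    ring

/-- zero-derivative + vanishing at infinity ⇒ zero. -/
lemma eq_zero_of_deriv_zero {D : ℝ → ℝ} (hD : ∀ x ∈ Ioi (0:ℝ), HasDerivAt D 0 x)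
    (hlim : Tendsto D atTop (𝓝 0)) : ∀ x ∈ Ioi (0:ℝ), D x = 0 := by
  intro x hx
  have hx' : (0:ℝ) < x := hx
  have key : ∀ y, x ≤ y → D y = D x := by
    intro y hy
    have hc : ContinuousOn D (Icc x y) := fun z hz =>
      ((hD z (lt_of_lt_of_le hx' hz.1)).continuousAt).continuousWithinAt
    have hd : ∀ z ∈ Ico x y, HasDerivWithinAt D 0 (Ici z) z := fun z hz =>
      ((hD z (lt_of_lt_of_le hx' hz.1)).hasDerivWithinAt)
    exact constant_of_has_deriv_right_zero hc hd y (right_mem_Icc.2 hy)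
  have h2 : Tendsto D atTop (𝓝 (D x)) := by
    refine Tendsto.congr' ?_ tendsto_const_nhds
    filter_upwards [eventually_ge_atTop x] with y hy using (key y hy).symm
  exact tendsto_nhds_unique h2 hlim

noncomputable def kf (t : ℝ) : ℝ := binetPhi t * (1 - Real.exp (-t))

lemma one_sub_exp_neg_mem {t : ℝ} (ht : 0 < t) : 0 ≤ 1 - Real.exp (-t) ∧ 1 - Real.exp (-t) ≤ 1 := by
  constructor
  · have : Real.exp (-t) ≤ Real.exp 0 := Real.exp_le_exp.2 (by linarith)
    rw [Real.exp_zero] at this; linarith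
  · have := Real.exp_pos (-t); linarith

lemma kf_contOn : ContinuousOn kf (Ioi 0) :=
  phi_continuousOn.mul ((continuous_const.sub (Real.continuous_exp.comp continuous_neg)).continuousOn)

lemma kf_nonneg {t : ℝ} (ht : 0 < t) : 0 ≤ kf t :=
  mul_nonneg (phi_nonneg ht) (one_sub_exp_neg_mem ht).1

lemma kf_le {t : ℝ} (ht : 0 < t) : kf t ≤ 1/12 := by
  have h1 := phi_nonneg ht
  have h2 := phi_le ht
  have h3 := one_sub_exp_neg_mem ht
  unfold kf; nlinarith

lemma exp_split (x t : ℝ) : Real.exp (-((x+1)*t)) = Real.exp (-(x*t)) * Real.exp (-t) := by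
  rw [← Real.exp_add]; ring_nf

/-- pointwise expansion of `t² k(t) e^{-xt}` into elementary pieces. -/
lemma kf_expand {t : ℝ} (ht : 0 < t) (x : ℝ) :
    t^2 * (kf t * Real.exp (-(x*t)))
      = t * Real.exp (-((x+1)*t)) - Real.exp (-(x*t)) + Real.exp (-((x+1)*t))
        + (1/2) * (t * Real.exp (-(x*t))) - (1/2) * (t * Real.exp (-((x+1)*t))) := by
  have hE := exp_sub_one_pos ht
  have hne : t ≠ 0 := ht.ne'
  rw [exp_split, Real.exp_neg]
  unfold kf binetPhi
  rw [Real.exp_neg]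
  have hEne : Real.exp t - 1 ≠ 0 := hE.ne'
  have hEpos := Real.exp_pos t
  field_simp
  ring

noncomputable def Qval (x : ℝ) : ℝ :=
  1/(x+1)^2 - 1/x + 1/(x+1) + (1/2)*(1/x^2) - (1/2)*(1/(x+1)^2)

lemma integral_Q {x : ℝ} (hx : 0 < x) :
    ∫ t in Ioi (0:ℝ), t^2 * (kf t * Real.exp (-(x*t))) = Qval x := by
  have hx1 : 0 < x + 1 := by linarith
  have i1 : IntegrableOn (fun t : ℝ => t * Real.exp (-((x+1)*t))) (Ioi 0) := by
    simpa using integrableOn_pow_mul_exp 1 hx1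
  have i2 : IntegrableOn (fun t : ℝ => Real.exp (-(x*t))) (Ioi 0) := integrableOn_exp_c hx
  have i3 : IntegrableOn (fun t : ℝ => Real.exp (-((x+1)*t))) (Ioi 0) := integrableOn_exp_c hx1
  have i4 : IntegrableOn (fun t : ℝ => (1/2) * (t * Real.exp (-(x*t)))) (Ioi 0) := by
    have : IntegrableOn (fun t : ℝ => t * Real.exp (-(x*t))) (Ioi 0) := by
      simpa using integrableOn_pow_mul_exp 1 hx
    exact this.const_mul _
  have i5 : IntegrableOn (fun t : ℝ => (1/2) * (t * Real.exp (-((x+1)*t)))) (Ioi 0) :=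
    i1.const_mul _
  have hcong : ∀ t ∈ Ioi (0:ℝ), t^2 * (kf t * Real.exp (-(x*t)))
      = (fun t => t * Real.exp (-((x+1)*t)) - Real.exp (-(x*t)) + Real.exp (-((x+1)*t))
        + (1/2) * (t * Real.exp (-(x*t))) - (1/2) * (t * Real.exp (-((x+1)*t)))) t :=
    fun t ht => kf_expand ht x
  have j2 : IntegrableOn (fun t : ℝ => t * Real.exp (-((x+1)*t)) - Real.exp (-(x*t))) (Ioi 0) := by
    exact i1.sub i2
  have j3 : IntegrableOn (fun t : ℝ => t * Real.exp (-((x+1)*t)) - Real.exp (-(x*t))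
      + Real.exp (-((x+1)*t))) (Ioi 0) := by exact j2.add i3
  have j4 : IntegrableOn (fun t : ℝ => t * Real.exp (-((x+1)*t)) - Real.exp (-(x*t))
      + Real.exp (-((x+1)*t)) + (1/2) * (t * Real.exp (-(x*t)))) (Ioi 0) := by exact j3.add i4
  rw [setIntegral_congr_fun measurableSet_Ioi hcong]
  rw [show (fun t : ℝ => t * Real.exp (-((x+1)*t)) - Real.exp (-(x*t)) + Real.exp (-((x+1)*t))
        + (1/2) * (t * Real.exp (-(x*t))) - (1/2) * (t * Real.exp (-((x+1)*t)))) = fun t =>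
        (t * Real.exp (-((x+1)*t)) - Real.exp (-(x*t)) + Real.exp (-((x+1)*t))
        + (1/2) * (t * Real.exp (-(x*t)))) - (1/2) * (t * Real.exp (-((x+1)*t))) from rfl,
    integral_sub j4 i5, integral_add j3 i4, integral_add j2 i3, integral_sub i1 i2,
    integral_const_mul, integral_const_mul,
    integral_t_exp_c hx1, integral_exp_c hx, integral_exp_c hx1,
    integral_t_exp_c hx]
  unfold Qval
  ring

noncomputable def Pfun (x : ℝ) : ℝ := ∫ t in Ioi (0:ℝ), (t * kf t) * Real.exp (-(x*t))

lemma hasDerivAt_Pfun {x : ℝ} (hx : 0 < x) : HasDerivAt Pfun (-(Qval x)) x := by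
  have hg0 : ∀ t ∈ Ioi (0:ℝ), 0 ≤ t * kf t := fun t ht => mul_nonneg (le_of_lt ht) (kf_nonneg ht)
  have hg1 : ∀ t ∈ Ioi (0:ℝ), t * kf t ≤ 1 + t := by
    intro t ht
    have ht' : (0:ℝ) < t := ht
    have := kf_le ht'
    nlinarith [kf_nonneg ht']
  have h := hasDerivAt_integral_aux (g := fun t => t * kf t)
    ((show ContinuousOn (fun t : ℝ => t) (Ioi 0) from continuousOn_id).mul kf_contOn) hg0 hg1 hx
  have he : (∫ t in Ioi (0:ℝ), t * (t * kf t * Real.exp (-(x * t)))) = Qval x := by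
    rw [← integral_Q hx]
    congr 1
    funext t
    ring
  rw [he] at h
  exact h

noncomputable def Rfun (x : ℝ) : ℝ :=
  (x+1)⁻¹ - Real.log (x+1) + Real.log x + (2*x)⁻¹ - (2*(x+1))⁻¹

lemma hasDerivAt_Rfun {x : ℝ} (hx : 0 < x) : HasDerivAt Rfun (-(Qval x)) x := by
  have hx1 : (0:ℝ) < x + 1 := by linarith
  have hid : HasDerivAt (fun y : ℝ => y + 1) 1 x := (hasDerivAt_id x).add_const 1
  have h1 : HasDerivAt (fun y : ℝ => (y+1)⁻¹) (-1/(x+1)^2) x := hid.inv hx1.ne'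
  have h2 : HasDerivAt (fun y : ℝ => Real.log (y+1)) (1/(x+1)) x := by
    have := hid.log hx1.ne'
    simpa using this
  have h3 : HasDerivAt Real.log x⁻¹ x := Real.hasDerivAt_log hx.ne'
  have h4 : HasDerivAt (fun y : ℝ => (2*y)⁻¹) (-2/(2*x)^2) x := by
    have := ((hasDerivAt_id x).const_mul 2).inv (by positivity : (2:ℝ)*x ≠ 0)
    simpa [Pi.inv_def] using this
  have h5 : HasDerivAt (fun y : ℝ => (2*(y+1))⁻¹) (-2/(2*(x+1))^2) x := by
    have := (hid.const_mul 2).inv (by positivity : (2:ℝ)*(x+1) ≠ 0)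
    simpa [Pi.inv_def] using this
  have h := (((h1.sub h2).add h3).add h4).sub h5
  refine h.congr_deriv ?_
  unfold Qval
  field_simp
  ring

lemma tendsto_log_one_add_inv : Tendsto (fun x : ℝ => Real.log (1 + 1/x)) atTop (𝓝 0) := by
  have h1 : Tendsto (fun x : ℝ => 1 + 1/x) atTop (𝓝 1) := by
    have h := (tendsto_inv_atTop_zero (𝕜 := ℝ)).const_add 1
    simpa [one_div] using h
  have h2 : ContinuousAt Real.log 1 := Real.continuousAt_log one_ne_zero
  have := h2.tendsto.comp h1
  simpa [Function.comp_def] using this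

lemma log_succ_sub_eventually :
    ∀ᶠ x : ℝ in atTop, Real.log (x+1) - Real.log x = Real.log (1 + 1/x) := by
  filter_upwards [eventually_gt_atTop (0:ℝ)] with x hx
  rw [show (1 : ℝ) + 1/x = (x+1)/x by field_simp, Real.log_div (by linarith) hx.ne']

lemma tendsto_Rfun : Tendsto Rfun atTop (𝓝 0) := by
  have hA : Tendsto (fun x : ℝ => (x+1)⁻¹) atTop (𝓝 0) :=
    tendsto_inv_atTop_zero.comp (tendsto_atTop_add_const_right _ 1 tendsto_id)
  have hB : Tendsto (fun x : ℝ => Real.log (x+1) - Real.log x) atTop (𝓝 0) := by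
    have hE : (fun x : ℝ => Real.log (x+1) - Real.log x)
        =ᶠ[atTop] (fun x => Real.log (1 + 1/x)) := log_succ_sub_eventually
    exact Tendsto.congr' hE.symm tendsto_log_one_add_inv
  have hC : Tendsto (fun x : ℝ => (2*x)⁻¹) atTop (𝓝 0) :=
    tendsto_inv_atTop_zero.comp (tendsto_id.const_mul_atTop two_pos)
  have hD : Tendsto (fun x : ℝ => (2*(x+1))⁻¹) atTop (𝓝 0) :=
    tendsto_inv_atTop_zero.comp
      ((tendsto_atTop_add_const_right _ 1 tendsto_id).const_mul_atTop two_pos)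
  have := ((hA.sub hB).add hC).sub hD
  simp only [sub_zero, add_zero, zero_sub, zero_add] at this
  refine this.congr (fun x => ?_)
  unfold Rfun
  ring

lemma Pfun_nonneg {x : ℝ} (hx : 0 < x) : 0 ≤ Pfun x := by
  refine setIntegral_nonneg measurableSet_Ioi (fun t ht => ?_)
  have ht' : (0:ℝ) < t := ht
  have := kf_nonneg ht'
  positivity

lemma Pfun_le {x : ℝ} (hx : 0 < x) : Pfun x ≤ (1/12) * (1/x^2) := by
  have hint : IntegrableOn (fun t : ℝ => (t * kf t) * Real.exp (-(x*t))) (Ioi 0) := by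
    refine integrableOn_aux (g := fun t => t * kf t)
      ((show ContinuousOn (fun t : ℝ => t) (Ioi 0) from continuousOn_id).mul kf_contOn)
      (fun t ht => ?_) hx
    have ht' : (0:ℝ) < t := ht
    rw [abs_of_nonneg (mul_nonneg ht'.le (kf_nonneg ht'))]
    nlinarith [kf_le ht', kf_nonneg ht']
  have hint2 : IntegrableOn (fun t : ℝ => (1/12) * (t * Real.exp (-(x*t)))) (Ioi 0) := by
    have : IntegrableOn (fun t : ℝ => t * Real.exp (-(x*t))) (Ioi 0) := by
      simpa using integrableOn_pow_mul_exp 1 hx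
    exact this.const_mul _
  have hmono : ∀ t ∈ Ioi (0:ℝ), (t * kf t) * Real.exp (-(x*t)) ≤ (1/12) * (t * Real.exp (-(x*t))) := by
    intro t ht
    have ht' : (0:ℝ) < t := ht
    have h1 := kf_le ht'
    have h0 := kf_nonneg ht'
    have h2 := Real.exp_pos (-(x*t))
    nlinarith [mul_nonneg (mul_nonneg (sub_nonneg.2 h1) ht'.le) h2.le]
  have h := setIntegral_mono_on hint hint2 measurableSet_Ioi hmono
  calc Pfun x ≤ ∫ t in Ioi (0:ℝ), (1/12) * (t * Real.exp (-(x*t))) := h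
    _ = (1/12) * (1/x^2) := by rw [integral_const_mul, integral_t_exp_c hx]
lemma tendsto_Pfun : Tendsto Pfun atTop (𝓝 0) := by
  refine squeeze_zero' (g := fun x : ℝ => (1/12)*(1/x^2)) ?_ ?_ ?_
  · filter_upwards [eventually_gt_atTop (0:ℝ)] with x hx using Pfun_nonneg hx
  · filter_upwards [eventually_gt_atTop (0:ℝ)] with x hx using Pfun_le hx
  · have h : Tendsto (fun x : ℝ => x ^ 2) atTop atTop := tendsto_pow_atTop (n := 2) (by norm_num)
    have h2 := h.inv_tendsto_atTop
    have h3 : Tendsto (fun x : ℝ => (1/12) * (1/x^2)) atTop (𝓝 ((1/12) * 0)) := by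
      refine Tendsto.const_mul _ ?_
      simpa [one_div, Pi.inv_def] using h2
    simpa using h3

lemma Pfun_eq_Rfun : ∀ x ∈ Ioi (0:ℝ), Pfun x = Rfun x := by
  have key := eq_zero_of_deriv_zero (D := fun x => Pfun x - Rfun x) ?_ ?_
  · intro x hx
    have := key x hx
    linarith [this]
  · intro x hx
    have h := (hasDerivAt_Pfun hx).sub (hasDerivAt_Rfun hx)
    simpa [Pi.sub_def] using h
  · have := tendsto_Pfun.sub tendsto_Rfun
    simpa using this

noncomputable def Ifun (x : ℝ) : ℝ := ∫ t in Ioi (0:ℝ), kf t * Real.exp (-(x*t))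

noncomputable def Gfun (x : ℝ) : ℝ := (x + 1/2) * (Real.log (x+1) - Real.log x) - 1

lemma hasDerivAt_Ifun {x : ℝ} (hx : 0 < x) : HasDerivAt Ifun (-(Rfun x)) x := by
  have hg1 : ∀ t ∈ Ioi (0:ℝ), kf t ≤ 1 + t := by
    intro t ht
    have ht' : (0:ℝ) < t := ht
    have := kf_le ht'
    linarith
  have h := hasDerivAt_integral_aux kf_contOn (fun t ht => kf_nonneg ht) hg1 hx
  have he : (∫ t in Ioi (0:ℝ), t * (kf t * Real.exp (-(x * t)))) = Rfun x := by
    rw [← Pfun_eq_Rfun x hx]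
    unfold Pfun
    congr 1
    funext t
    ring
  rw [he] at h
  exact h

lemma hasDerivAt_Gfun {x : ℝ} (hx : 0 < x) : HasDerivAt Gfun (-(Rfun x)) x := by
  have hx1 : (0:ℝ) < x + 1 := by linarith
  have h1 : HasDerivAt (fun y : ℝ => y + 1/2) 1 x := (hasDerivAt_id x).add_const _
  have h2 : HasDerivAt (fun y : ℝ => Real.log (y+1)) (1/(x+1)) x := by
    simpa using ((hasDerivAt_id x).add_const 1).log hx1.ne'
  have h3 : HasDerivAt Real.log x⁻¹ x := Real.hasDerivAt_log hx.ne'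
  have h := ((h1.mul (h2.sub h3)).sub_const 1 : HasDerivAt Gfun
    (1 * (Real.log (x+1) - Real.log x) + (x + 1/2) * (1/(x+1) - x⁻¹)) x)
  refine h.congr_deriv ?_
  unfold Rfun
  simp only [Pi.sub_apply]
  field_simp
  ring

lemma Ifun_nonneg {x : ℝ} (hx : 0 < x) : 0 ≤ Ifun x := by
  refine setIntegral_nonneg measurableSet_Ioi (fun t ht => ?_)
  have ht' : (0:ℝ) < t := ht
  have := kf_nonneg ht'
  positivity

lemma Ifun_le {x : ℝ} (hx : 0 < x) : Ifun x ≤ (1/12) * (1/x) := by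
  have hint : IntegrableOn (fun t : ℝ => kf t * Real.exp (-(x*t))) (Ioi 0) := by
    refine integrableOn_aux kf_contOn (fun t ht => ?_) hx
    have ht' : (0:ℝ) < t := ht
    rw [abs_of_nonneg (kf_nonneg ht')]
    have := kf_le ht'
    linarith
  have hint2 : IntegrableOn (fun t : ℝ => (1/12) * Real.exp (-(x*t))) (Ioi 0) :=
    (integrableOn_exp_c hx).const_mul _
  have hmono : ∀ t ∈ Ioi (0:ℝ), kf t * Real.exp (-(x*t)) ≤ (1/12) * Real.exp (-(x*t)) := by
    intro t ht
    have ht' : (0:ℝ) < t := ht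
    exact mul_le_mul_of_nonneg_right (kf_le ht') (Real.exp_pos _).le
  calc Ifun x ≤ ∫ t in Ioi (0:ℝ), (1/12) * Real.exp (-(x*t)) :=
      setIntegral_mono_on hint hint2 measurableSet_Ioi hmono
    _ = (1/12) * (1/x) := by rw [integral_const_mul, integral_exp_c hx]

lemma tendsto_Ifun : Tendsto Ifun atTop (𝓝 0) := by
  refine squeeze_zero' (g := fun x : ℝ => (1/12)*(1/x)) ?_ ?_ ?_
  · filter_upwards [eventually_gt_atTop (0:ℝ)] with x hx using Ifun_nonneg hx
  · filter_upwards [eventually_gt_atTop (0:ℝ)] with x hx using Ifun_le hx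
  · have h3 : Tendsto (fun x : ℝ => (1/12) * (1/x)) atTop (𝓝 ((1/12) * 0)) := by
      refine Tendsto.const_mul _ ?_
      exact (tendsto_inv_atTop_zero (𝕜 := ℝ)).congr (fun x => (one_div x).symm)
    simpa using h3

lemma tendsto_Gfun : Tendsto Gfun atTop (𝓝 0) := by
  have h1 : Tendsto (fun x : ℝ => x * Real.log (1 + 1/x)) atTop (𝓝 1) := by
    have := Real.tendsto_mul_log_one_add_div_atTop 1
    simpa [one_div] using this
  have h2 : Tendsto (fun x : ℝ => (1/2) * Real.log (1 + 1/x)) atTop (𝓝 ((1/2) * 0)) :=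
    tendsto_log_one_add_inv.const_mul _
  have h := (h1.add h2).sub_const 1
  have h' : Tendsto (fun x : ℝ => x * Real.log (1 + 1/x) + (1/2) * Real.log (1 + 1/x) - 1)
      atTop (𝓝 0) := by
    convert h using 2
    norm_num
  refine Tendsto.congr' ?_ h'
  filter_upwards [eventually_gt_atTop (0:ℝ)] with x hx
  unfold Gfun
  rw [show Real.log (x+1) - Real.log x = Real.log (1 + 1/x) from ?_]
  · ring
  · rw [show (1 : ℝ) + 1/x = (x+1)/x by field_simp, Real.log_div (by linarith) hx.ne']

lemma Ifun_eq_Gfun : ∀ x ∈ Ioi (0:ℝ), Ifun x = Gfun x := by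
  have key := eq_zero_of_deriv_zero (D := fun x => Ifun x - Gfun x) ?_ ?_
  · intro x hx
    have := key x hx
    linarith [this]
  · intro x hx
    have h := (hasDerivAt_Ifun hx).sub (hasDerivAt_Gfun hx)
    simpa [Pi.sub_def] using h
  · have := tendsto_Ifun.sub tendsto_Gfun
    simpa using this

/-- The functional equation: μ(x) − μ(x+1) = (x+1/2)(log(x+1) − log x) − 1. -/
lemma mu_sub {x : ℝ} (hx : 0 < x) : mu x - mu (x+1) = Gfun x := by
  have hx1 : (0:ℝ) < x + 1 := by linarith
  have h := integral_sub (integrableOn_phi_exp hx) (integrableOn_phi_exp hx1)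
  have he : (∫ t in Ioi (0:ℝ),
      (binetPhi t * Real.exp (-(x*t)) - binetPhi t * Real.exp (-((x+1)*t)))) = Ifun x := by
    congr 1
    funext t
    unfold kf
    rw [exp_split]
    ring
  rw [← Ifun_eq_Gfun x hx, ← he]
  unfold mu
  rw [h]

lemma mu_nonneg {x : ℝ} (hx : 0 < x) : 0 ≤ mu x := by
  refine setIntegral_nonneg measurableSet_Ioi (fun t ht => ?_)
  have ht' : (0:ℝ) < t := ht
  have := phi_nonneg ht'
  positivity

lemma mu_le {x : ℝ} (hx : 0 < x) : mu x ≤ (1/12) * (1/x) := by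
  have hint2 : IntegrableOn (fun t : ℝ => (1/12) * Real.exp (-(x*t))) (Ioi 0) :=
    (integrableOn_exp_c hx).const_mul _
  have hmono : ∀ t ∈ Ioi (0:ℝ), binetPhi t * Real.exp (-(x*t)) ≤ (1/12) * Real.exp (-(x*t)) := by
    intro t ht
    exact mul_le_mul_of_nonneg_right (phi_le ht) (Real.exp_pos _).le
  calc mu x ≤ ∫ t in Ioi (0:ℝ), (1/12) * Real.exp (-(x*t)) :=
      setIntegral_mono_on (integrableOn_phi_exp hx) hint2 measurableSet_Ioi hmono
    _ = (1/12) * (1/x) := by rw [integral_const_mul, integral_exp_c hx]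

noncomputable def Sfun (x : ℝ) : ℝ := (x - 1/2) * Real.log x - x + Real.log (2*π) / 2

noncomputable def ffun (x : ℝ) : ℝ := Real.exp (Sfun x + mu x)

lemma convexOn_Sfun : ConvexOn ℝ (Ioi 0) Sfun := by
  have h1 : ConvexOn ℝ (Ioi 0) (fun x : ℝ => x * Real.log x) :=
    Real.convexOn_mul_log.subset Ioi_subset_Ici_self (convex_Ioi 0)
  have hlog : ConcaveOn ℝ (Ioi 0) Real.log := strictConcaveOn_log_Ioi.concaveOn
  have h2 : ConvexOn ℝ (Ioi 0) (fun x : ℝ => (1/2) * (-Real.log x)) := by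
    have := (hlog.neg).smul (by norm_num : (0:ℝ) ≤ 1/2)
    simpa [smul_eq_mul, Pi.neg_def] using this
  have h3 : ConvexOn ℝ (Ioi 0) (fun x : ℝ => -x + Real.log (2*π) / 2) := by
    refine ⟨convex_Ioi 0, fun x _ y _ a b ha hb hab => le_of_eq ?_⟩
    simp only [smul_eq_mul]
    linear_combination (-(Real.log (2*π) / 2)) * hab
  have h := (h1.add h2).add h3
  have he : Sfun = fun x : ℝ => x * Real.log x + (1/2) * (-Real.log x) + (-x + Real.log (2*π)/2) := by
    funext x
    unfold Sfun
    ring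
  rw [he]
  exact h

lemma convexOn_mu : ConvexOn ℝ (Ioi 0) mu := by
  refine ⟨convex_Ioi 0, fun x hx y hy a b ha hb hab => ?_⟩
  simp only [smul_eq_mul]
  have hx' : (0:ℝ) < x := hx
  have hy' : (0:ℝ) < y := hy
  have hz : 0 < a * x + b * y := by
    rcases eq_or_lt_of_le ha with h | h
    · rw [← h] at hab ⊢
      simp at hab
      rw [hab]
      simpa using hy'
    · have : 0 ≤ b * y := mul_nonneg hb hy'.le
      nlinarith
  have hpt : ∀ t ∈ Ioi (0:ℝ), binetPhi t * Real.exp (-((a*x+b*y)*t))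
      ≤ a * (binetPhi t * Real.exp (-(x*t))) + b * (binetPhi t * Real.exp (-(y*t))) := by
    intro t ht
    have ht' : (0:ℝ) < t := ht
    have hconv := convexOn_exp.2 (Set.mem_univ (-(x*t))) (Set.mem_univ (-(y*t))) ha hb hab
    simp only [smul_eq_mul] at hconv
    have harg : a * -(x*t) + b * -(y*t) = -((a*x+b*y)*t) := by ring
    rw [harg] at hconv
    have hphi := phi_nonneg ht'
    calc binetPhi t * Real.exp (-((a*x+b*y)*t))
        ≤ binetPhi t * (a * Real.exp (-(x*t)) + b * Real.exp (-(y*t))) :=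
          mul_le_mul_of_nonneg_left hconv hphi
      _ = a * (binetPhi t * Real.exp (-(x*t))) + b * (binetPhi t * Real.exp (-(y*t))) := by ring
  have hR : IntegrableOn (fun t : ℝ => a * (binetPhi t * Real.exp (-(x*t)))
      + b * (binetPhi t * Real.exp (-(y*t)))) (Ioi 0) := by
    exact ((integrableOn_phi_exp hx').const_mul a).add ((integrableOn_phi_exp hy').const_mul b)
  calc mu (a*x + b*y) ≤ ∫ t in Ioi (0:ℝ), (a * (binetPhi t * Real.exp (-(x*t)))
        + b * (binetPhi t * Real.exp (-(y*t)))) :=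
        setIntegral_mono_on (integrableOn_phi_exp hz) hR measurableSet_Ioi hpt
    _ = a * mu x + b * mu y := by
        unfold mu
        rw [integral_add ((integrableOn_phi_exp hx').const_mul a)
          ((integrableOn_phi_exp hy').const_mul b), integral_const_mul, integral_const_mul]

lemma ffun_feq {y : ℝ} (hy : 0 < y) : ffun (y+1) = y * ffun y := by
  have h := mu_sub hy
  unfold Gfun at h
  have hexp : Sfun (y+1) + mu (y+1) = Real.log y + (Sfun y + mu y) := by
    unfold Sfun
    linear_combination -h
  unfold ffun
  rw [hexp, Real.exp_add, Real.exp_log hy]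

lemma tendsto_Gfun_add_one :
    Tendsto (fun x : ℝ => (x + 1/2) * (Real.log (x+1) - Real.log x)) atTop (𝓝 1) := by
  have := tendsto_Gfun.add_const 1
  simp only [zero_add] at this
  refine Tendsto.congr (fun x => ?_) this
  unfold Gfun
  ring

lemma ffun_one : ffun 1 = 1 := by
  set c : ℝ := Sfun 1 + mu 1 with hc
  have key : ∀ n : ℕ, Sfun ((n:ℝ)+1) + mu ((n:ℝ)+1) - Real.log (Nat.factorial n) = c := by
    intro n
    induction n with
    | zero => simp [Nat.factorial, hc]
    | succ n ih =>
      have hn1 : (0:ℝ) < (n:ℝ) + 1 := by positivity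
      have h := mu_sub hn1
      unfold Gfun at h
      have hfac : Real.log (Nat.factorial (n+1))
          = Real.log ((n:ℝ)+1) + Real.log (Nat.factorial n) := by
        rw [Nat.factorial_succ]
        push_cast
        rw [Real.log_mul (by positivity) (by positivity)]
      have hexp : Sfun ((n:ℝ)+1+1) + mu ((n:ℝ)+1+1)
          = Real.log ((n:ℝ)+1) + (Sfun ((n:ℝ)+1) + mu ((n:ℝ)+1)) := by
        unfold Sfun
        linear_combination -h
      push_cast
      rw [hexp, hfac]
      push_cast at ih
      linarith
  have hE : (fun n : ℕ => Sfun ((n:ℝ)+1) + mu ((n:ℝ)+1) - Real.log (Nat.factorial n))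
      =ᶠ[atTop] (fun n : ℕ => ((n:ℝ) + 1/2) * (Real.log ((n:ℝ)+1) - Real.log (n:ℝ)) - 1
        + Real.log π / 2 - Real.log (Stirling.stirlingSeq n) + mu ((n:ℝ)+1)) := by
    filter_upwards [eventually_ge_atTop 1] with n hn
    have hn0 : (0:ℝ) < (n:ℝ) := by exact_mod_cast hn
    have hs : Stirling.stirlingSeq n
        = (Nat.factorial n : ℝ) / (Real.sqrt (2*n) * ((n:ℝ) / Real.exp 1) ^ (n:ℕ)) := rfl
    have hden : (0:ℝ) < Real.sqrt (2*n) * ((n:ℝ) / Real.exp 1) ^ (n:ℕ) := by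
      apply mul_pos (Real.sqrt_pos.2 (by positivity))
      exact pow_pos (by positivity) _
    have hfacpos : (0:ℝ) < (Nat.factorial n : ℝ) := by positivity
    have hlogfac : Real.log (Nat.factorial n)
        = Real.log (Stirling.stirlingSeq n) + (1/2) * Real.log (2*(n:ℝ))
          + (n:ℝ) * (Real.log (n:ℝ) - 1) := by
      rw [hs, Real.log_div hfacpos.ne' hden.ne', Real.log_mul
        (Real.sqrt_pos.2 (by positivity : (0:ℝ) < 2*(n:ℝ))).ne' (pow_pos (by positivity) _).ne',
        Real.log_sqrt (by positivity : (0:ℝ) ≤ 2*(n:ℝ)), Real.log_pow,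
        Real.log_div hn0.ne' (Real.exp_pos 1).ne', Real.log_exp]
      ring
    unfold Sfun
    rw [hlogfac]
    rw [Real.log_mul two_ne_zero Real.pi_pos.ne', Real.log_mul two_ne_zero hn0.ne']
    ring
  have hlim : Tendsto (fun n : ℕ => Sfun ((n:ℝ)+1) + mu ((n:ℝ)+1) - Real.log (Nat.factorial n))
      atTop (𝓝 0) := by
    have h1 := tendsto_Gfun_add_one.comp (tendsto_natCast_atTop_atTop (R := ℝ))
    have h2 : Tendsto (fun n : ℕ => Real.log (Stirling.stirlingSeq n)) atTop
        (𝓝 (Real.log π / 2)) := by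
      have hpi : Real.sqrt π ≠ 0 := (Real.sqrt_pos.2 Real.pi_pos).ne'
      have h := (Real.continuousAt_log hpi).tendsto.comp Stirling.tendsto_stirlingSeq_sqrt_pi
      have hls : Real.log (Real.sqrt π) = Real.log π / 2 := by
        rw [Real.log_sqrt Real.pi_pos.le]
      rw [hls] at h
      exact h
    have h3 : Tendsto (fun n : ℕ => mu ((n:ℝ)+1)) atTop (𝓝 0) := by
      refine squeeze_zero' (g := fun n : ℕ => (1/12) * (1/((n:ℝ)+1))) ?_ ?_ ?_
      · filter_upwards with n
        exact mu_nonneg (by positivity)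
      · filter_upwards with n
        exact mu_le (by positivity)
      · have hn : Tendsto (fun n : ℕ => (n:ℝ) + 1) atTop atTop :=
          tendsto_atTop_add_const_right _ 1 tendsto_natCast_atTop_atTop
        have h4 := (tendsto_inv_atTop_zero.comp hn).const_mul (1/12 : ℝ)
        simpa [one_div, Function.comp] using h4
    have hsum := ((h1.sub_const 1).add_const (Real.log π / 2)).sub h2 |>.add h3
    refine Tendsto.congr' hE.symm ?_
    have : ((1:ℝ) - 1 + Real.log π / 2 - Real.log π / 2 + 0) = 0 := by ring
    rw [← this]
    exact hsum
  have hlim2 : Tendsto (fun _ : ℕ => c) atTop (𝓝 0) := Tendsto.congr (fun n => key n) hlim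
  have hc0 : c = 0 := tendsto_nhds_unique tendsto_const_nhds hlim2
  unfold ffun
  rw [show Sfun 1 + mu 1 = c from hc.symm, hc0, Real.exp_zero]

lemma binet {x : ℝ} (hx : 0 < x) : Real.log (Real.Gamma x) = Sfun x + mu x := by
  have hcomp : Real.log ∘ ffun = fun y => Sfun y + mu y := by
    funext y
    simp [ffun, Real.log_exp]
  have hconv : ConvexOn ℝ (Ioi 0) (Real.log ∘ ffun) := by
    rw [hcomp]
    exact convexOn_Sfun.add convexOn_mu
  have heq := Real.eq_Gamma_of_log_convex hconv (fun {y} hy => ffun_feq hy)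
    (fun {y} _ => Real.exp_pos _) ffun_one
  rw [← heq (mem_Ioi.2 hx)]
  simp [ffun, Real.log_exp]

end BinetAux


/-- For `x > 0`, `σ(x) = 12 · ∫₀^∞ φ(s/x)·e^{−s} ds`. -/
theorem stirlingSigma_eq_integral_subst :
    ∀ x : ℝ, 0 < x →
      stirlingSigma x = 12 * ∫ s in Set.Ioi (0 : ℝ), binetPhi (s / x) * Real.exp (-s) := by
  intro x hx
  have hsubst : (∫ s in Set.Ioi (0:ℝ), binetPhi (s / x) * Real.exp (-s)) = x * BinetAux.mu x := by
    have hinv : 0 < x⁻¹ := inv_pos.2 hx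
    have h := MeasureTheory.integral_comp_mul_right_Ioi
      (fun t => binetPhi t * Real.exp (-(x*t))) 0 hinv
    simp only [zero_mul, inv_inv, smul_eq_mul] at h
    have hcong : (∫ s in Set.Ioi (0:ℝ), binetPhi (s / x) * Real.exp (-s))
        = ∫ s in Set.Ioi (0:ℝ), binetPhi (s * x⁻¹) * Real.exp (-(x * (s * x⁻¹))) := by
      congr 1
      funext s
      rw [div_eq_mul_inv]
      congr 2
      field_simp
    rw [hcong, h]
    rfl
  have hΓ : 0 < Real.Gamma x := Real.Gamma_pos_of_pos hx
  have hsq : 0 < Real.sqrt (2 * π * x) := Real.sqrt_pos.2 (by positivity)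
  have hde : (0:ℝ) < x / Real.exp 1 := div_pos hx (Real.exp_pos 1)
  have hpw : 0 < (x / Real.exp 1) ^ x := Real.rpow_pos_of_pos hde x
  have hlog : Real.log (Real.Gamma (x+1) / (Real.sqrt (2 * π * x) * (x / Real.exp 1) ^ x))
      = BinetAux.mu x := by
    rw [Real.Gamma_add_one hx.ne']
    rw [Real.log_div (mul_pos hx hΓ).ne' (mul_pos hsq hpw).ne',
      Real.log_mul hx.ne' hΓ.ne', Real.log_mul hsq.ne' hpw.ne',
      Real.log_sqrt (by positivity), Real.log_rpow hde,
      Real.log_div hx.ne' (Real.exp_pos 1).ne', Real.log_exp,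
      Real.log_mul (by positivity : (2*π : ℝ) ≠ 0) hx.ne',
      BinetAux.binet hx]
    unfold BinetAux.Sfun
    ring
  unfold stirlingSigma
  rw [hlog, hsubst]
  ring
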